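/- For the dynamical error model with the KYP/SPR conditions, the gradient update law θ̇ = −γ φ̂ e_y, and any α > 0, the continuous-time regret satisfies, for every T ≥ t₀, ∫_{t₀}^T e(t)ᵀQ e(t) dt − ∫_{t₀}^T δ(t) dt ≤ V(t₀) − V(T) ≤ V(t₀), where δ(t) = 2 e(t)ᵀP b (θ*ᵀφ̃(t)); i.e., the regret relative to the exponentially decaying perturbation δ is bounded by the finite constant V(t₀), uniformly in T. -/

import Mathlib

/-!
`V` is a Lyapunov function for the error model. Differentiating, the Lyapunov equations
contribute `-eᵀQe - α φ̃ᵀQ̄φ̃`, and the KYP condition `Pb = cᵀ` turns the input term of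
`d/dt (eᵀPe)` into `2 e_y ((θ - θ*)ᵀφ̂ + θ*ᵀφ̃)`; the gradient law makes
`d/dt γ⁻¹‖θ - θ*‖² = -2 e_y (θ - θ*)ᵀφ̂` cancel the first part exactly, leaving
`V̇ = -eᵀQe + δ - α φ̃ᵀQ̄φ̃ ≤ -(eᵀQe - δ)`. Integrating over `[t₀, T]` gives the regret bound,
and `V(T) ≥ 0` gives `V(t₀) - V(T) ≤ V(t₀)`.
-/

open Matrix MeasureTheory Set

section Calculus

variable {X R : Type*} [TopologicalSpace X] [TopologicalSpace R] [Mul R] [AddCommMonoid R]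
  [ContinuousAdd R] [ContinuousMul R] {ι m : Type*} [Fintype ι]

@[fun_prop]
protected theorem ContinuousOn.dotProduct {A B : X → ι → R} {s : Set X}
    (hA : ContinuousOn A s) (hB : ContinuousOn B s) :
    ContinuousOn (fun x => A x ⬝ᵥ B x) s := by
  rw [continuousOn_iff_continuous_domRestrict] at *
  exact hA.dotProduct hB

variable {𝕜 : Type*} [NontriviallyNormedField 𝕜] {f g : 𝕜 → ι → 𝕜} {f' g' : ι → 𝕜} {t : 𝕜}

protected theorem HasDerivAt.dotProduct (hf : HasDerivAt f f' t) (hg : HasDerivAt g g' t) :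
    HasDerivAt (fun s => f s ⬝ᵥ g s) (f' ⬝ᵥ g t + f t ⬝ᵥ g') t := by
  simp only [dotProduct, ← Finset.sum_add_distrib]
  exact HasDerivAt.fun_sum fun i _ => (hasDerivAt_pi.mp hf i).mul (hasDerivAt_pi.mp hg i)

theorem HasDerivAt.matrix_mulVec (M : Matrix m ι 𝕜) (hg : HasDerivAt g g' t) :
    HasDerivAt (fun s => M *ᵥ g s) (M *ᵥ g') t :=
  hasDerivAt_pi.mpr fun i => by
    simpa only [mulVec, dotProduct] using
      HasDerivAt.fun_sum fun j _ => (hasDerivAt_pi.mp hg j).const_mul (M i j)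

end Calculus

namespace Matrix

variable {ι : Type*} [Fintype ι]

theorem mulVec_dotProduct_add_dotProduct_mulVec_of_lyapunov {R : Type*} [CommRing R]
    {M P Q : Matrix ι ι R} (h : Mᵀ * P + P * M = -Q) (x : ι → R) :
    M *ᵥ x ⬝ᵥ P *ᵥ x + x ⬝ᵥ P *ᵥ (M *ᵥ x) = -(x ⬝ᵥ Q *ᵥ x) := by
  rw [← dotProduct_neg, ← neg_mulVec, ← h, add_mulVec, dotProduct_add, ← mulVec_mulVec,
    ← mulVec_mulVec, dotProduct_mulVec x Mᵀ, vecMul_transpose]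

theorem IsSymm.dotProduct_mulVec_comm {R : Type*} [CommSemiring R] {P : Matrix ι ι R}
    (hP : P.IsSymm) (x y : ι → R) : x ⬝ᵥ P *ᵥ y = y ⬝ᵥ P *ᵥ x := by
  rw [dotProduct_mulVec, ← hP.eq, vecMul_transpose, hP.eq, dotProduct_comm]

theorem PosSemidef.dotProduct_mulVec_self_nonneg {P : Matrix ι ι ℝ} (hP : P.PosSemidef)
    (x : ι → ℝ) : 0 ≤ x ⬝ᵥ P *ᵥ x := by
  simpa using hP.dotProduct_mulVec_nonneg x

theorem hasDerivAt_dotProduct_mulVec_of_lyapunov {𝕜 : Type*} [NontriviallyNormedField 𝕜]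
    {M P Q : Matrix ι ι 𝕜} (h : Mᵀ * P + P * M = -Q) {x : 𝕜 → ι → 𝕜} {u : ι → 𝕜} {t : 𝕜}
    (hx : HasDerivAt x (M *ᵥ x t + u) t) :
    HasDerivAt (fun s => x s ⬝ᵥ P *ᵥ x s)
      (-(x t ⬝ᵥ Q *ᵥ x t) + (u ⬝ᵥ P *ᵥ x t + x t ⬝ᵥ P *ᵥ u)) t := by
  refine (hx.dotProduct (hx.matrix_mulVec P)).congr_deriv ?_
  rw [← mulVec_dotProduct_add_dotProduct_mulVec_of_lyapunov h, mulVec_add, add_dotProduct,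
    dotProduct_add]
  ring

end Matrix

theorem integral_le_sub_of_hasDerivAt_le_neg {V V' f : ℝ → ℝ} {a b : ℝ} (hab : a ≤ b)
    (hV : ∀ t ∈ Icc a b, HasDerivAt V (V' t) t) (hf : IntervalIntegrable f volume a b)
    (hle : ∀ t ∈ Ioo a b, V' t ≤ -f t) :
    ∫ t in a..b, f t ≤ V a - V b := by
  have := intervalIntegral.integral_le_sub_of_hasDeriv_right_of_le hab
    (HasDerivAt.continuousOn hV).neg
    (fun t ht => (hV t (Ioo_subset_Icc_self ht)).neg.hasDerivWithinAt)
    ((intervalIntegrable_iff_integrableOn_Icc_of_le hab).mp hf)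
    (fun t ht => le_neg_of_le_neg (hle t ht))
  rwa [Pi.neg_apply, Pi.neg_apply, neg_sub_neg] at this

section ErrorModel

variable {ι κ : Type*} [Fintype ι] [Fintype κ] {γ α : ℝ}
  {A P Q : Matrix ι ι ℝ} {b c : ι → ℝ} {Λ Pbar Qbar : Matrix κ κ ℝ} {θstar : κ → ℝ}
  {e : ℝ → ι → ℝ} {θ φhat φtil : ℝ → κ → ℝ} {t : ℝ}

theorem hasDerivAt_errorModel_lyapunov (hγ : γ ≠ 0) (hPsym : P.IsSymm)
    (hLyap : Aᵀ * P + P * A = -Q) (hPb : P *ᵥ b = c) (hLyapBar : Λᵀ * Pbar + Pbar * Λ = -Qbar)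
    (hde : HasDerivAt e
      (A *ᵥ e t + ((θ t - θstar) ⬝ᵥ φhat t) • b + (θstar ⬝ᵥ φtil t) • b) t)
    (hdφ : HasDerivAt φtil (Λ *ᵥ φtil t) t)
    (hdθ : HasDerivAt θ ((-(γ * (c ⬝ᵥ e t))) • φhat t) t) :
    HasDerivAt (fun s => γ⁻¹ * ((θ s - θstar) ⬝ᵥ (θ s - θstar))
        + e s ⬝ᵥ P *ᵥ e s + α * (φtil s ⬝ᵥ Pbar *ᵥ φtil s))
      (-(e t ⬝ᵥ Q *ᵥ e t) + 2 * (e t ⬝ᵥ P *ᵥ b) * (θstar ⬝ᵥ φtil t)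
        - α * (φtil t ⬝ᵥ Qbar *ᵥ φtil t)) t := by
  have hθ := hdθ.sub_const θstar
  have hφ := Matrix.hasDerivAt_dotProduct_mulVec_of_lyapunov hLyapBar (u := 0)
    (by rwa [add_zero])
  have he := Matrix.hasDerivAt_dotProduct_mulVec_of_lyapunov hLyap
    (by rwa [add_assoc, ← add_smul] at hde)
  refine (((hθ.dotProduct hθ).const_mul γ⁻¹).add he |>.add (hφ.const_mul α)).congr_deriv ?_
  have hey : c ⬝ᵥ e t = e t ⬝ᵥ P *ᵥ b := by rw [hPb, dotProduct_comm]
  simp only [hey, hPsym.dotProduct_mulVec_comm b, smul_dotProduct, dotProduct_smul, mulVec_smul,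
    mulVec_zero, zero_dotProduct, dotProduct_zero, smul_eq_mul, dotProduct_comm (φhat t)]
  field_simp
  ring

end ErrorModel

theorem kyp_constant_continuous_regret_general
    {n N : ℕ} (t₀ γ α : ℝ) (hγ : 0 < γ) (hα : 0 < α)
    (A : Matrix (Fin n) (Fin n) ℝ) (b c : Fin n → ℝ)
    (P Q : Matrix (Fin n) (Fin n) ℝ)
    (hPsym : P.IsSymm) (hP : P.PosDef)
    (hLyap : Aᵀ * P + P * A = -Q) (hPb : P.mulVec b = c)
    (Λ Pbar Qbar : Matrix (Fin N) (Fin N) ℝ)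
    (hPbar : Pbar.PosDef)
    (hQbar : Qbar.PosDef)
    (hLyapBar : Λᵀ * Pbar + Pbar * Λ = -Qbar)
    (θstar : Fin N → ℝ)
    (e : ℝ → Fin n → ℝ) (θ φhat φtil : ℝ → Fin N → ℝ)
    (ey : ℝ → ℝ) (hey : ∀ t, ey t = c ⬝ᵥ e t)
    (hde : ∀ t, t₀ ≤ t → HasDerivAt e
      (A.mulVec (e t) + ((θ t - θstar) ⬝ᵥ φhat t) • b + (θstar ⬝ᵥ φtil t) • b) t)
    (hdφ : ∀ t, t₀ ≤ t → HasDerivAt φtil (Λ.mulVec (φtil t)) t)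
    (hdθ : ∀ t, t₀ ≤ t → HasDerivAt θ ((-(γ * ey t)) • φhat t) t)
    (V : ℝ → ℝ)
    (hV : ∀ t, V t = γ⁻¹ * ((θ t - θstar) ⬝ᵥ (θ t - θstar))
      + e t ⬝ᵥ P.mulVec (e t) + α * (φtil t ⬝ᵥ Pbar.mulVec (φtil t)))     (δ : ℝ → ℝ)
    (hδ : ∀ t, δ t = 2 * (e t ⬝ᵥ P.mulVec b) * (θstar ⬝ᵥ φtil t)) :
    ∀ T, t₀ ≤ T →
      (∫ t in t₀..T, e t ⬝ᵥ Q.mulVec (e t)) - (∫ t in t₀..T, δ t) ≤ V t₀ - V T ∧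
      V t₀ - V T ≤ V t₀ := by
  intro T hT
  have hVderiv : ∀ t ∈ Icc t₀ T, HasDerivAt V
      (-(e t ⬝ᵥ Q *ᵥ e t) + δ t - α * (φtil t ⬝ᵥ Qbar *ᵥ φtil t)) t := fun t ht => by
    rw [funext hV, hδ]
    exact hasDerivAt_errorModel_lyapunov hγ.ne' hPsym hLyap hPb hLyapBar (hde t ht.1)
      (hdφ t ht.1) (hey t ▸ hdθ t ht.1)
  have he : ContinuousOn e (uIcc t₀ T) :=
    HasDerivAt.continuousOn fun t ht => hde t (by rw [uIcc_of_le hT] at ht; exact ht.1)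
  have hφ : ContinuousOn φtil (uIcc t₀ T) :=
    HasDerivAt.continuousOn fun t ht => hdφ t (by rw [uIcc_of_le hT] at ht; exact ht.1)
  have hQint : IntervalIntegrable (fun t => e t ⬝ᵥ Q *ᵥ e t) volume t₀ T :=
    ContinuousOn.intervalIntegrable (by fun_prop)
  have hδint : IntervalIntegrable δ volume t₀ T := by
    rw [funext hδ]
    exact ContinuousOn.intervalIntegrable (by fun_prop)
  have hVT : 0 ≤ V T := by
    rw [hV T]
    exact add_nonneg (add_nonneg
      (mul_nonneg (inv_nonneg.2 hγ.le) (by simpa using dotProduct_self_star_nonneg (θ T - θstar)))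
      (hP.posSemidef.dotProduct_mulVec_self_nonneg _))
      (mul_nonneg hα.le (hPbar.posSemidef.dotProduct_mulVec_self_nonneg _))
  refine ⟨?_, sub_le_self _ hVT⟩
  rw [← intervalIntegral.integral_sub hQint hδint]
  refine integral_le_sub_of_hasDerivAt_le_neg hT hVderiv (hQint.sub hδint) fun t _ => ?_
  nlinarith [hQbar.posSemidef.dotProduct_mulVec_self_nonneg (φtil t)]

/-- For the dynamical error model with the KYP/SPR conditions, the gradient update
law `θ̇ = -γ φ̂ e_y`, and any `α > 0`, the continuous-time regret satisfies, for
every `T ≥ t₀`, `∫_{t₀}^T eᵀQe dt - ∫_{t₀}^T δ dt ≤ V(t₀) - V(T) ≤ V(t₀)`, where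
`δ(t) = 2 e(t)ᵀPb (θ*ᵀφ̃(t))`: the regret relative to the exponentially decaying
perturbation `δ` is bounded by the finite constant `V(t₀)`, uniformly in `T`. -/
theorem kyp_constant_continuous_regret
    {n N : ℕ} (t₀ γ α : ℝ) (hγ : 0 < γ) (hα : 0 < α)
    (A : Matrix (Fin n) (Fin n) ℝ) (b c : Fin n → ℝ)
    (P Q : Matrix (Fin n) (Fin n) ℝ)
    (hPsym : P.IsSymm) (hP : P.PosDef) (hQsym : Q.IsSymm) (hQ : Q.PosDef)
    (hLyap : Aᵀ * P + P * A = -Q) (hPb : P.mulVec b = c)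
    (Λ Pbar Qbar : Matrix (Fin N) (Fin N) ℝ)
    (hPbarSym : Pbar.IsSymm) (hPbar : Pbar.PosDef)
    (hQbarSym : Qbar.IsSymm) (hQbar : Qbar.PosDef)
    (hLyapBar : Λᵀ * Pbar + Pbar * Λ = -Qbar)
    (θstar : Fin N → ℝ)
    (e : ℝ → Fin n → ℝ) (θ φhat φtil : ℝ → Fin N → ℝ)
    (ey : ℝ → ℝ) (hey : ∀ t, ey t = c ⬝ᵥ e t)
    (hde : ∀ t, t₀ ≤ t → HasDerivAt e
      (A.mulVec (e t) + ((θ t - θstar) ⬝ᵥ φhat t) • b + (θstar ⬝ᵥ φtil t) • b) t)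
    (hdφ : ∀ t, t₀ ≤ t → HasDerivAt φtil (Λ.mulVec (φtil t)) t)
    (hdθ : ∀ t, t₀ ≤ t → HasDerivAt θ ((-(γ * ey t)) • φhat t) t)
    (V : ℝ → ℝ)
    (hV : ∀ t, V t = γ⁻¹ * ((θ t - θstar) ⬝ᵥ (θ t - θstar))
      + e t ⬝ᵥ P.mulVec (e t) + α * (φtil t ⬝ᵥ Pbar.mulVec (φtil t)))     (δ : ℝ → ℝ)
    (hδ : ∀ t, δ t = 2 * (e t ⬝ᵥ P.mulVec b) * (θstar ⬝ᵥ φtil t)) :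
    ∀ T, t₀ ≤ T →
      (∫ t in t₀..T, e t ⬝ᵥ Q.mulVec (e t)) - (∫ t in t₀..T, δ t) ≤ V t₀ - V T ∧
      V t₀ - V T ≤ V t₀ :=
  kyp_constant_continuous_regret_general t₀ γ α hγ hα A b c P Q hPsym hP hLyap hPb Λ Pbar Qbar hPbar
    hQbar hLyapBar θstar e θ φhat φtil ey hey hde hdφ hdθ V hV δ hδ
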